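/- arXiv:2107.14198 — 9 statements merged into one kernel-verified Lean document; each statement's English description precedes it below -/
import Mathlib

section
/- Let L be a residuated lattice and ι ∈ L. In the full twist structure Tw(L): (1) the element (e,ι) is a positive idempotent, i.e. (e,ι)·(e,ι) = (e,ι) and for every (a,b), (e,ι)\(a,b) ≤ (a,b), (a,b)/(e,ι) ≤ (a,b), (a,b) ≤ (e,ι)·(a,b) and (a,b) ≤ (a,b)·(e,ι); (2) an element (a,b) satisfies (e,ι)\(a,b)/(e,ι) = (a,b) if and only if a·b ∨ b·a ≤ ι. -/
/-- A residuated lattice: a lattice with a monoid operation and residuals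
`ldiv x z` (i.e. `x \ z`) and `rdiv z y` (i.e. `z / y`) satisfying the
residuation law `x * y ≤ z ↔ y ≤ x \ z ↔ x ≤ z / y`. -/
class ResiduatedLattice (α : Type*) extends Lattice α, Monoid α where
  ldiv : α → α → α
  rdiv : α → α → α
  ldiv_adj : ∀ {x y z : α}, x * y ≤ z ↔ y ≤ ldiv x z
  rdiv_adj : ∀ {x y z : α}, x * y ≤ z ↔ x ≤ rdiv z y

open ResiduatedLattice

variable {α : Type*} [ResiduatedLattice α]

/-- Involution on the full twist structure: `∼(a,b) = (b,a)`. -/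
def tneg (p : α × α) : α × α := (p.2, p.1)

/-- Join of the twist structure `L × L^∂`. -/
def tjoin (p q : α × α) : α × α := (p.1 ⊔ q.1, p.2 ⊓ q.2)

/-- Meet of the twist structure `L × L^∂`. -/
def tmeet (p q : α × α) : α × α := (p.1 ⊓ q.1, p.2 ⊔ q.2)

/-- Order of the twist structure `L × L^∂`. -/
def tle (p q : α × α) : Prop := p.1 ≤ q.1 ∧ q.2 ≤ p.2

/-- Multiplication of the twist structure:
`(a,b)·(a′,b′) = (a·a′, b′/a ∧ a′\b)`. -/
def tmul (p q : α × α) : α × α := (p.1 * q.1, rdiv q.2 p.1 ⊓ ldiv q.1 p.2)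

/-- Left division of the twist structure:
`(a,b)\(a′,b′) = (a\a′ ∧ b/b′, b′·a)`. -/
def tld (p q : α × α) : α × α := (ldiv p.1 q.1 ⊓ rdiv p.2 q.2, q.2 * p.1)

/-- Right division of the twist structure:
`(a′,b′)/(a,b) = (a′/a ∧ b′\b, a·b′)`. -/
def trd (q p : α × α) : α × α := (rdiv q.1 p.1 ⊓ ldiv q.2 p.2, p.1 * q.2)

lemma ldiv_one' (z : α) : ldiv (1:α) z = z := by
  apply le_antisymm
  · have h := ldiv_adj.mpr (le_refl (ldiv (1:α) z)); rwa [one_mul] at h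
  · exact ldiv_adj.mp (by rw [one_mul])

lemma rdiv_one' (z : α) : rdiv z (1:α) = z := by
  apply le_antisymm
  · have h := rdiv_adj.mpr (le_refl (rdiv z (1:α))); rwa [mul_one] at h
  · exact rdiv_adj.mp (by rw [mul_one])

/-- in the full twist structure `Tw(L)` over a residuated
lattice `L` with `ι ∈ L`: (1) the element `(e,ι)` is a positive idempotent;
(2) `(a,b)` is fixed by the double-division conucleus `δ_{(e,ι)}`, i.e.
`(e,ι)\(a,b)/(e,ι) = (a,b)`, iff `a·b ∨ b·a ≤ ι`. -/
theorem twist_unit_positive_idempotent (ι : α) :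
    (tmul ((1 : α), ι) ((1 : α), ι) = ((1 : α), ι)) ∧
    (∀ p : α × α,
      tle (tld ((1 : α), ι) p) p ∧
      tle (trd p ((1 : α), ι)) p ∧
      tle p (tmul ((1 : α), ι) p) ∧
      tle p (tmul p ((1 : α), ι))) ∧
    (∀ p : α × α,
      tld ((1 : α), ι) (trd p ((1 : α), ι)) = p ↔ p.1 * p.2 ⊔ p.2 * p.1 ≤ ι) := by
  refine ⟨?_, ?_, ?_⟩
  · simp [tmul, ldiv_one', rdiv_one']
  · intro p
    refine ⟨⟨?_, ?_⟩, ⟨?_, ?_⟩, ⟨?_, ?_⟩, ⟨?_, ?_⟩⟩ <;>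
      simp [tld, trd, tmul, tle, ldiv_one', rdiv_one']
  · intro p
    have key : tld ((1:α), ι) (trd p ((1:α), ι))
        = ((p.1 ⊓ ldiv p.2 ι) ⊓ rdiv ι p.2, p.2) := by
      simp [tld, trd, ldiv_one', rdiv_one']
    rw [key]
    constructor
    · intro h
      have h1 : (p.1 ⊓ ldiv p.2 ι) ⊓ rdiv ι p.2 = p.1 := congrArg Prod.fst h
      have ha : p.1 ≤ ldiv p.2 ι := h1 ▸ le_trans inf_le_left inf_le_right
      have hb : p.1 ≤ rdiv ι p.2 := h1 ▸ inf_le_right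
      exact sup_le (rdiv_adj.mpr hb) (ldiv_adj.mpr ha)
    · intro h
      have ha : p.1 ≤ ldiv p.2 ι := ldiv_adj.mp (le_trans le_sup_right h)
      have hb : p.1 ≤ rdiv ι p.2 := rdiv_adj.mp (le_trans le_sup_left h)
      have : (p.1 ⊓ ldiv p.2 ι) ⊓ rdiv ι p.2 = p.1 := by
        rw [inf_eq_left.mpr ha, inf_eq_left.mpr hb]
      rw [this]
end

section
/- Let (L,∨,∧,·,\,/,e) be a residuated lattice and ι ∈ L. Then the set Tw(L,ι) = {(a,b) ∈ L×L : a·b ∨ b·a ≤ ι}, equipped with the lattice operations of L × L^∂ and the twist operations ∼, ·, \, /, and with identity element (e,ι), is an involutive residuated lattice. -/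
open ResiduatedLattice

variable {α : Type*} [ResiduatedLattice α]

section Helpers

lemma lmul_gc (x : α) : GaloisConnection (x * ·) (ldiv x) :=
  fun _ _ => ldiv_adj

lemma rmul_gc (y : α) : GaloisConnection (· * y) (rdiv · y) :=
  fun _ _ => rdiv_adj

lemma rl_mul_le_mul {a b c d : α} (h1 : a ≤ b) (h2 : c ≤ d) : a * c ≤ b * d :=
  le_trans ((lmul_gc a).monotone_l h2) ((rmul_gc d).monotone_l h1)

lemma rl_mul_ldiv_le (x z : α) : x * ldiv x z ≤ z := ldiv_adj.mpr le_rfl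

lemma rl_rdiv_mul_le (z y : α) : rdiv z y * y ≤ z := rdiv_adj.mpr le_rfl

lemma rl_ldiv_inf (x u v : α) : ldiv x (u ⊓ v) = ldiv x u ⊓ ldiv x v :=
  (lmul_gc x).u_inf

lemma rl_rdiv_inf (u v y : α) : rdiv (u ⊓ v) y = rdiv u y ⊓ rdiv v y :=
  (rmul_gc y).u_inf

lemma rl_ldiv_one (z : α) : ldiv 1 z = z :=
  le_antisymm (by simpa using rl_mul_ldiv_le 1 z) (ldiv_adj.mp (by simp))

lemma rl_rdiv_one (z : α) : rdiv z 1 = z :=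
  le_antisymm (by simpa using rl_rdiv_mul_le z 1) (rdiv_adj.mp (by simp))

lemma rl_rdiv_mul (z x y : α) : rdiv z (x * y) = rdiv (rdiv z y) x := by
  have h : ∀ w : α, w ≤ rdiv z (x * y) ↔ w ≤ rdiv (rdiv z y) x := by
    intro w
    rw [← rdiv_adj, ← rdiv_adj, ← rdiv_adj, ← mul_assoc]
  exact le_antisymm ((h _).mp le_rfl) ((h _).mpr le_rfl)

lemma rl_ldiv_mul (x y z : α) : ldiv (x * y) z = ldiv y (ldiv x z) := by
  have h : ∀ w : α, w ≤ ldiv (x * y) z ↔ w ≤ ldiv y (ldiv x z) := by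
    intro w
    rw [← ldiv_adj, ← ldiv_adj, ← ldiv_adj, mul_assoc]
  exact le_antisymm ((h _).mp le_rfl) ((h _).mpr le_rfl)

lemma rl_ldiv_rdiv (x z y : α) : ldiv x (rdiv z y) = rdiv (ldiv x z) y := by
  have h : ∀ w : α, w ≤ ldiv x (rdiv z y) ↔ w ≤ rdiv (ldiv x z) y := by
    intro w
    rw [← ldiv_adj, ← rdiv_adj, ← rdiv_adj, ← ldiv_adj, mul_assoc]
  exact le_antisymm ((h _).mp le_rfl) ((h _).mpr le_rfl)

lemma rl_mul_sup (x y z : α) : (x ⊔ y) * z = x * z ⊔ y * z :=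
  (rmul_gc z).l_sup

lemma rl_sup_mul (x y z : α) : x * (y ⊔ z) = x * y ⊔ x * z :=
  (lmul_gc x).l_sup

end Helpers


/-- for a residuated lattice `L` and `ι ∈ L`, the set
`Tw(L,ι) = {(a,b) : a·b ∨ b·a ≤ ι}`, equipped with the lattice operations of
`L × L^∂` and the twist operations `∼, ·, \, /` and identity `(e,ι)`, is an
involutive residuated lattice: it contains `(e,ι)`, is closed under all the
operations, the lattice operations compute joins and meets for the twist
order, `·` is a monoid operation with identity `(e,ι)`, the residuation law
holds, and `∼` is an involution satisfying contraposition. -/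
theorem twist_over_element_is_involutive_residuated_lattice (ι : α) :
    letI S : Set (α × α) := {p | p.1 * p.2 ⊔ p.2 * p.1 ≤ ι}
    -- closure under the operations and membership of the identity
    (((1 : α), ι) ∈ S) ∧
    (∀ p ∈ S, tneg p ∈ S) ∧
    (∀ p ∈ S, ∀ q ∈ S,
      tjoin p q ∈ S ∧ tmeet p q ∈ S ∧ tmul p q ∈ S ∧ tld p q ∈ S ∧ trd p q ∈ S) ∧
    -- `tle` is a partial order on `S`
    (∀ p ∈ S, tle p p) ∧
    (∀ p ∈ S, ∀ q ∈ S, tle p q → tle q p → p = q) ∧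
    (∀ p ∈ S, ∀ q ∈ S, ∀ r ∈ S, tle p q → tle q r → tle p r) ∧
    -- `tjoin` and `tmeet` are least upper bounds and greatest lower bounds
    (∀ p ∈ S, ∀ q ∈ S, tle p (tjoin p q) ∧ tle q (tjoin p q) ∧
      ∀ r ∈ S, tle p r → tle q r → tle (tjoin p q) r) ∧
    (∀ p ∈ S, ∀ q ∈ S, tle (tmeet p q) p ∧ tle (tmeet p q) q ∧
      ∀ r ∈ S, tle r p → tle r q → tle r (tmeet p q)) ∧
    -- monoid structure with identity `(e,ι)`
    (∀ p ∈ S, ∀ q ∈ S, ∀ r ∈ S, tmul (tmul p q) r = tmul p (tmul q r)) ∧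
    (∀ p ∈ S, tmul ((1 : α), ι) p = p ∧ tmul p ((1 : α), ι) = p) ∧
    -- residuation law
    (∀ p ∈ S, ∀ q ∈ S, ∀ r ∈ S,
      (tle (tmul p q) r ↔ tle q (tld p r)) ∧ (tle (tmul p q) r ↔ tle p (trd r q))) ∧
    -- involution
    (∀ p ∈ S, tneg (tneg p) = p) ∧
    (∀ p ∈ S, ∀ q ∈ S, tld p (tneg q) = trd (tneg p) q) := by
  refine ⟨?_, ?_, ?_, ?_, ?_, ?_, ?_, ?_, ?_, ?_, ?_, ?_, ?_⟩
  · show (1 : α) * ι ⊔ ι * 1 ≤ ι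
    simp
  · intro p hp
    show p.2 * p.1 ⊔ p.1 * p.2 ≤ ι
    rw [sup_comm]
    exact hp
  · intro p hp q hq
    have hp1 : p.1 * p.2 ≤ ι := le_trans le_sup_left hp
    have hp2 : p.2 * p.1 ≤ ι := le_trans le_sup_right hp
    have hq1 : q.1 * q.2 ≤ ι := le_trans le_sup_left hq
    have hq2 : q.2 * q.1 ≤ ι := le_trans le_sup_right hq
    refine ⟨?_, ?_, ?_, ?_, ?_⟩
    · show (p.1 ⊔ q.1) * (p.2 ⊓ q.2) ⊔ (p.2 ⊓ q.2) * (p.1 ⊔ q.1) ≤ ι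
      refine sup_le ?_ ?_
      · rw [rl_mul_sup]
        exact sup_le (le_trans (rl_mul_le_mul le_rfl inf_le_left) hp1)
          (le_trans (rl_mul_le_mul le_rfl inf_le_right) hq1)
      · rw [rl_sup_mul]
        exact sup_le (le_trans (rl_mul_le_mul inf_le_left le_rfl) hp2)
          (le_trans (rl_mul_le_mul inf_le_right le_rfl) hq2)
    · show (p.1 ⊓ q.1) * (p.2 ⊔ q.2) ⊔ (p.2 ⊔ q.2) * (p.1 ⊓ q.1) ≤ ι
      refine sup_le ?_ ?_
      · rw [rl_sup_mul]
        exact sup_le (le_trans (rl_mul_le_mul inf_le_left le_rfl) hp1)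
          (le_trans (rl_mul_le_mul inf_le_right le_rfl) hq1)
      · rw [rl_mul_sup]
        exact sup_le (le_trans (rl_mul_le_mul le_rfl inf_le_left) hp2)
          (le_trans (rl_mul_le_mul le_rfl inf_le_right) hq2)
    · show p.1 * q.1 * (rdiv q.2 p.1 ⊓ ldiv q.1 p.2) ⊔
        (rdiv q.2 p.1 ⊓ ldiv q.1 p.2) * (p.1 * q.1) ≤ ι
      refine sup_le ?_ ?_
      · calc p.1 * q.1 * (rdiv q.2 p.1 ⊓ ldiv q.1 p.2)
            ≤ p.1 * q.1 * ldiv q.1 p.2 := rl_mul_le_mul le_rfl inf_le_right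
          _ = p.1 * (q.1 * ldiv q.1 p.2) := mul_assoc _ _ _
          _ ≤ p.1 * p.2 := rl_mul_le_mul le_rfl (rl_mul_ldiv_le _ _)
          _ ≤ ι := hp1
      · calc (rdiv q.2 p.1 ⊓ ldiv q.1 p.2) * (p.1 * q.1)
            ≤ rdiv q.2 p.1 * (p.1 * q.1) := rl_mul_le_mul inf_le_left le_rfl
          _ = rdiv q.2 p.1 * p.1 * q.1 := (mul_assoc _ _ _).symm
          _ ≤ q.2 * q.1 := rl_mul_le_mul (rl_rdiv_mul_le _ _) le_rfl
          _ ≤ ι := hq2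
    · show (ldiv p.1 q.1 ⊓ rdiv p.2 q.2) * (q.2 * p.1) ⊔
        (q.2 * p.1) * (ldiv p.1 q.1 ⊓ rdiv p.2 q.2) ≤ ι
      refine sup_le ?_ ?_
      · calc (ldiv p.1 q.1 ⊓ rdiv p.2 q.2) * (q.2 * p.1)
            ≤ rdiv p.2 q.2 * (q.2 * p.1) := rl_mul_le_mul inf_le_right le_rfl
          _ = rdiv p.2 q.2 * q.2 * p.1 := (mul_assoc _ _ _).symm
          _ ≤ p.2 * p.1 := rl_mul_le_mul (rl_rdiv_mul_le _ _) le_rfl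
          _ ≤ ι := hp2
      · calc (q.2 * p.1) * (ldiv p.1 q.1 ⊓ rdiv p.2 q.2)
            ≤ (q.2 * p.1) * ldiv p.1 q.1 := rl_mul_le_mul le_rfl inf_le_left
          _ = q.2 * (p.1 * ldiv p.1 q.1) := mul_assoc _ _ _
          _ ≤ q.2 * q.1 := rl_mul_le_mul le_rfl (rl_mul_ldiv_le _ _)
          _ ≤ ι := hq2
    · show (rdiv p.1 q.1 ⊓ ldiv p.2 q.2) * (q.1 * p.2) ⊔
        (q.1 * p.2) * (rdiv p.1 q.1 ⊓ ldiv p.2 q.2) ≤ ι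
      refine sup_le ?_ ?_
      · calc (rdiv p.1 q.1 ⊓ ldiv p.2 q.2) * (q.1 * p.2)
            ≤ rdiv p.1 q.1 * (q.1 * p.2) := rl_mul_le_mul inf_le_left le_rfl
          _ = rdiv p.1 q.1 * q.1 * p.2 := (mul_assoc _ _ _).symm
          _ ≤ p.1 * p.2 := rl_mul_le_mul (rl_rdiv_mul_le _ _) le_rfl
          _ ≤ ι := hp1
      · calc (q.1 * p.2) * (rdiv p.1 q.1 ⊓ ldiv p.2 q.2)
            ≤ (q.1 * p.2) * ldiv p.2 q.2 := rl_mul_le_mul le_rfl inf_le_right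
          _ = q.1 * (p.2 * ldiv p.2 q.2) := mul_assoc _ _ _
          _ ≤ q.1 * q.2 := rl_mul_le_mul le_rfl (rl_mul_ldiv_le _ _)
          _ ≤ ι := hq1
  · intro p _
    exact ⟨le_rfl, le_rfl⟩
  · intro p _ q _ h1 h2
    exact Prod.ext (le_antisymm h1.1 h2.1) (le_antisymm h2.2 h1.2)
  · intro p _ q _ r _ h1 h2
    exact ⟨h1.1.trans h2.1, h2.2.trans h1.2⟩
  · intro p _ q _
    exact ⟨⟨le_sup_left, inf_le_left⟩, ⟨le_sup_right, inf_le_right⟩,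
      fun r _ h1 h2 => ⟨sup_le h1.1 h2.1, le_inf h1.2 h2.2⟩⟩
  · intro p _ q _
    exact ⟨⟨inf_le_left, le_sup_left⟩, ⟨inf_le_right, le_sup_right⟩,
      fun r _ h1 h2 => ⟨le_inf h1.1 h2.1, sup_le h1.2 h2.2⟩⟩
  · intro p _ q _ r _
    refine Prod.ext (mul_assoc _ _ _) ?_
    show rdiv r.2 (p.1 * q.1) ⊓ ldiv r.1 (rdiv q.2 p.1 ⊓ ldiv q.1 p.2) =
      rdiv (rdiv r.2 q.1 ⊓ ldiv r.1 q.2) p.1 ⊓ ldiv (q.1 * r.1) p.2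
    rw [rl_rdiv_mul, rl_ldiv_inf, rl_ldiv_rdiv, rl_ldiv_mul, rl_rdiv_inf, inf_assoc]
  · intro p hp
    have hp1 : p.1 * p.2 ≤ ι := le_trans le_sup_left hp
    have hp2 : p.2 * p.1 ≤ ι := le_trans le_sup_right hp
    constructor
    · refine Prod.ext (one_mul _) ?_
      show rdiv p.2 1 ⊓ ldiv p.1 ι = p.2
      rw [rl_rdiv_one]
      exact inf_eq_left.mpr (ldiv_adj.mp hp1)
    · refine Prod.ext (mul_one _) ?_
      show rdiv ι p.1 ⊓ ldiv 1 p.2 = p.2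
      rw [rl_ldiv_one]
      exact inf_eq_right.mpr (rdiv_adj.mp hp2)
  · intro p _ q _ r _
    constructor
    · show (p.1 * q.1 ≤ r.1 ∧ r.2 ≤ rdiv q.2 p.1 ⊓ ldiv q.1 p.2) ↔
        (q.1 ≤ ldiv p.1 r.1 ⊓ rdiv p.2 r.2 ∧ r.2 * p.1 ≤ q.2)
      simp only [le_inf_iff]
      constructor
      · rintro ⟨h1, h2, h3⟩
        exact ⟨⟨ldiv_adj.mp h1, rdiv_adj.mp (ldiv_adj.mpr h3)⟩, rdiv_adj.mpr h2⟩
      · rintro ⟨⟨h1, h2⟩, h3⟩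
        exact ⟨ldiv_adj.mpr h1, rdiv_adj.mp h3, ldiv_adj.mp (rdiv_adj.mpr h2)⟩
    · show (p.1 * q.1 ≤ r.1 ∧ r.2 ≤ rdiv q.2 p.1 ⊓ ldiv q.1 p.2) ↔
        (p.1 ≤ rdiv r.1 q.1 ⊓ ldiv r.2 q.2 ∧ q.1 * r.2 ≤ p.2)
      simp only [le_inf_iff]
      constructor
      · rintro ⟨h1, h2, h3⟩
        exact ⟨⟨rdiv_adj.mp h1, ldiv_adj.mp (rdiv_adj.mpr h2)⟩, ldiv_adj.mpr h3⟩
      · rintro ⟨⟨h1, h2⟩, h3⟩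
        exact ⟨rdiv_adj.mpr h1, rdiv_adj.mp (ldiv_adj.mpr h2), ldiv_adj.mp h3⟩
  · intro p _
    rfl
  · intro p _ q _
    refine Prod.ext ?_ rfl
    show ldiv p.1 q.2 ⊓ rdiv p.2 q.1 = rdiv p.2 q.1 ⊓ ldiv p.1 q.2
    exact inf_comm _ _
end

section
/- Let L be a residuated lattice and ι ∈ L. The set Tw(L,ι) = {(a,b) ∈ L×L : a·b ∨ b·a ≤ ι} is a downset of the direct product lattice L × L (coordinatewise order). The set M_ι = {(a,b) : a = ι/b ∧ b\ι and b = ι/a ∧ a\ι} consists of maximal elements of Tw(L,ι), and if ι is cyclic then Tw(L,ι) equals the downset of M_ι in L × L. -/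
open ResiduatedLattice

variable {α : Type*} [ResiduatedLattice α]

/-- for a residuated lattice `L` and `ι ∈ L`, the set
`Tw(L,ι) = {(a,b) : a·b ∨ b·a ≤ ι}` is a downset of the direct product
lattice `L × L` (coordinatewise order); the set
`M_ι = {(a,b) : a = ι/b ∧ b\ι and b = ι/a ∧ a\ι}` consists of maximal
elements of `Tw(L,ι)`; and if `ι` is cyclic then `Tw(L,ι)` is exactly the
downset of `M_ι` in `L × L`. -/
theorem twist_set_downset_and_maximal (ι : α) :
    letI S : Set (α × α) := {p | p.1 * p.2 ⊔ p.2 * p.1 ≤ ι}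
    letI M : Set (α × α) :=
      {p | p.1 = rdiv ι p.2 ⊓ ldiv p.2 ι ∧ p.2 = rdiv ι p.1 ⊓ ldiv p.1 ι}
    -- `S` is a downset of `L × L`
    (∀ p ∈ S, ∀ q : α × α, q.1 ≤ p.1 → q.2 ≤ p.2 → q ∈ S) ∧
    -- elements of `M` are maximal elements of `S`
    (∀ p ∈ M, p ∈ S ∧ ∀ q ∈ S, p.1 ≤ q.1 → p.2 ≤ q.2 → q = p) ∧
    -- if `ι` is cyclic, `S` is the downset of `M`
    ((∀ x : α, ldiv x ι = rdiv ι x) →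
      S = {q : α × α | ∃ p ∈ M, q.1 ≤ p.1 ∧ q.2 ≤ p.2}) := by
  have mul_mono : ∀ {a b c d : α}, a ≤ b → c ≤ d → a * c ≤ b * d := by
    intro a b c d h1 h2
    calc a * c ≤ b * c := rdiv_adj.mpr (h1.trans (rdiv_adj.mp le_rfl))
      _ ≤ b * d := ldiv_adj.mpr (h2.trans (ldiv_adj.mp le_rfl))
  have down : ∀ p : α × α, p.1 * p.2 ⊔ p.2 * p.1 ≤ ι → ∀ q : α × α,
      q.1 ≤ p.1 → q.2 ≤ p.2 → q.1 * q.2 ⊔ q.2 * q.1 ≤ ι := by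
    intro p hp q h1 h2
    exact sup_le ((mul_mono h1 h2).trans (le_sup_left.trans hp))
      ((mul_mono h2 h1).trans (le_sup_right.trans hp))
  have maxi : ∀ p : α × α,
      (p.1 = rdiv ι p.2 ⊓ ldiv p.2 ι ∧ p.2 = rdiv ι p.1 ⊓ ldiv p.1 ι) →
      p.1 * p.2 ⊔ p.2 * p.1 ≤ ι ∧
      ∀ q : α × α, q.1 * q.2 ⊔ q.2 * q.1 ≤ ι → p.1 ≤ q.1 → p.2 ≤ q.2 → q = p := by
    intro p ⟨ha, hb⟩
    constructor
    · exact sup_le (rdiv_adj.mpr (ha.le.trans inf_le_left))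
        (ldiv_adj.mpr (ha.le.trans inf_le_right))
    · intro q hq h1 h2
      have hq1 : q.1 * q.2 ≤ ι := le_sup_left.trans hq
      have hq2 : q.2 * q.1 ≤ ι := le_sup_right.trans hq
      have e1 : q.1 ≤ p.1 := by
        rw [ha]
        refine le_inf ?_ ?_
        · exact rdiv_adj.mp ((mul_mono le_rfl h2).trans hq1)
        · exact ldiv_adj.mp ((mul_mono h2 le_rfl).trans hq2)
      have e2 : q.2 ≤ p.2 := by
        rw [hb]
        refine le_inf ?_ ?_
        · exact rdiv_adj.mp ((mul_mono le_rfl h1).trans hq2)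
        · exact ldiv_adj.mp ((mul_mono h1 le_rfl).trans hq1)
      exact Prod.ext (le_antisymm e1 h1) (le_antisymm e2 h2)
  refine ⟨down, fun p hp => maxi p hp, ?_⟩
  intro cyc
  have le_rr : ∀ x : α, x ≤ rdiv ι (rdiv ι x) := by
    intro x
    refine rdiv_adj.mp ?_
    rw [← cyc x]
    exact ldiv_adj.mpr le_rfl
  have anti : ∀ {x y : α}, x ≤ y → rdiv ι y ≤ rdiv ι x := by
    intro x y h
    exact rdiv_adj.mp ((mul_mono le_rfl h).trans (rdiv_adj.mpr le_rfl))
  have triple : ∀ x : α, rdiv ι (rdiv ι (rdiv ι x)) = rdiv ι x :=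
    fun x => le_antisymm (anti (le_rr x)) (le_rr (rdiv ι x))
  ext q
  simp only [Set.mem_setOf_eq]
  constructor
  · intro hq
    refine ⟨(rdiv ι q.2, rdiv ι (rdiv ι q.2)), ⟨?_, ?_⟩, ?_, le_rr q.2⟩
    · rw [cyc, inf_idem, triple]
    · rw [cyc, inf_idem]
    · exact rdiv_adj.mp (le_sup_left.trans hq)
  · rintro ⟨p, hpM, h1, h2⟩
    exact down p (maxi p hpM).1 q h1 h2
end

section
/- Let A be an involutive residuated lattice and τ a Nelson conucleus on A. If x, y ∈ A satisfy τ(x) = τ(y) and τ(∼x) = τ(∼y), then x = y. -/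
open ResiduatedLattice

variable {α : Type*} [ResiduatedLattice α]

/-- A (cyclic) involutive residuated lattice: a residuated lattice with an
involution `∼` satisfying `∼∼x = x` and the contraposition law
`x\∼y = ∼x/y`. -/
class InvResiduatedLattice (β : Type*) extends ResiduatedLattice β where
  neg : β → β
  neg_neg : ∀ x : β, neg (neg x) = x
  contra : ∀ x y : β, ldiv x (neg y) = rdiv (neg x) y

open InvResiduatedLattice

/-- A conucleus on a residuated lattice (conditions (C1)-(C5)). -/
def IsConucleus {β : Type*} [Lattice β] [Monoid β] (τ : β → β) : Prop :=
  (∀ x, τ x ≤ x) ∧ (∀ x, τ (τ x) = τ x) ∧ (∀ x y, x ≤ y → τ x ≤ τ y) ∧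
  (∀ x y, τ x * τ y ≤ τ (x * y)) ∧
  (∀ x, τ 1 * τ x = τ x) ∧ (∀ x, τ x * τ 1 = τ x)

/-- A Nelson conucleus: a conucleus additionally satisfying
(T1) `τ(x∨y) = τx ∨ τy`, (T2) `τ(x·y) = τx·τy`, and
(T3) `x·y ≤ τx·y ∨ x·τy`. -/
def IsNelsonConucleus {β : Type*} [Lattice β] [Monoid β] (τ : β → β) : Prop :=
  IsConucleus τ ∧
  (∀ x y, τ (x ⊔ y) = τ x ⊔ τ y) ∧
  (∀ x y, τ (x * y) = τ x * τ y) ∧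
  (∀ x y, x * y ≤ τ x * y ⊔ x * τ y)

section Aux

variable {β : Type*} [InvResiduatedLattice β]

private lemma rl_mul_le_mul_left (c : β) {a b : β} (h : a ≤ b) : c * a ≤ c * b :=
  ldiv_adj.mpr (le_trans h (ldiv_adj.mp (le_refl (c * b))))

private lemma rl_mul_le_mul_right (c : β) {a b : β} (h : a ≤ b) : a * c ≤ b * c :=
  rdiv_adj.mpr (le_trans h (rdiv_adj.mp (le_refl (b * c))))

private lemma rl_le_iff (a b : β) : a ≤ b ↔ a * neg b ≤ neg (1 : β) := by
  have key : rdiv (neg (1 : β)) (neg b) = ldiv (1 : β) b := by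
    rw [← contra (1 : β) (neg b), InvResiduatedLattice.neg_neg]
  constructor
  · intro h
    apply rdiv_adj.mpr
    rw [key]
    exact ldiv_adj.mp (by rw [one_mul]; exact h)
  · intro h
    have h2 := rdiv_adj.mp h
    rw [key] at h2
    have := ldiv_adj.mpr h2
    rwa [one_mul] at this

private lemma rl_key (τ : β → β) (hτ : IsNelsonConucleus τ) {a b : β}
    (h1 : τ a = τ b) (h2 : τ (neg a) = τ (neg b)) : a ≤ b := by
  obtain ⟨⟨hC1, -, -, -, -, -⟩, -, -, hT3⟩ := hτ
  rw [rl_le_iff]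
  refine le_trans (hT3 a (neg b)) (sup_le ?_ ?_)
  · rw [h1]
    exact le_trans (rl_mul_le_mul_right _ (hC1 b)) ((rl_le_iff b b).mp le_rfl)
  · rw [← h2]
    exact le_trans (rl_mul_le_mul_left _ (hC1 (neg a))) ((rl_le_iff a a).mp le_rfl)

end Aux

/-- for an involutive residuated lattice `A` with a Nelson
conucleus `τ`, if `τ(x) = τ(y)` and `τ(∼x) = τ(∼y)` then `x = y`. -/
theorem nelson_conucleus_separating {α : Type*} [InvResiduatedLattice α]
    (τ : α → α) (hτ : IsNelsonConucleus τ) (x y : α)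
    (h1 : τ x = τ y)
    (h2 : τ (InvResiduatedLattice.neg x) = τ (InvResiduatedLattice.neg y)) :
    x = y :=
  le_antisymm (rl_key τ hτ h1 h2) (rl_key τ hτ h1.symm h2.symm)
end

section
/- Let A be a residuated lattice and τ a Nelson conucleus on A. Define x ⇒ y = τ(x)\y and y ⇐ x = y/τ(x). Then the map n(x) = τ(x) is a homomorphism from the algebra (A, ∧, ∨, ·, ⇒, ⇐, e) to the conucleus image A_τ = (τ[A], ∧_τ, ∨, ·, \_τ, /_τ, e); that is, τ(x∧y) = τ(x)∧_τ τ(y), τ(x∨y) = τ(x)∨τ(y), τ(x·y) = τ(x)·τ(y), τ(x⇒y) = τ(x)\_τ τ(y), τ(y⇐x) = τ(y)/_τ τ(x), and τ(e) = e. -/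
open ResiduatedLattice

variable {α : Type*} [ResiduatedLattice α]

open InvResiduatedLattice

/-- for a residuated lattice `A` with a Nelson conucleus `τ`,
setting `x ⇒ y = τ(x)\y` and `y ⇐ x = y/τ(x)`, the map `n(x) = τ(x)` is a
homomorphism from `(A, ∧, ∨, ·, ⇒, ⇐, e)` to the conucleus image
`A_τ = (τ[A], ∧_τ, ∨, ·, \_τ, /_τ, e)`. -/
theorem tau_homomorphism_to_image {α : Type*} [ResiduatedLattice α]
    (τ : α → α) (hτ : IsNelsonConucleus τ) :
    (∀ x y : α, τ (x ⊓ y) = τ (τ x ⊓ τ y)) ∧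
    (∀ x y : α, τ (x ⊔ y) = τ x ⊔ τ y) ∧
    (∀ x y : α, τ (x * y) = τ x * τ y) ∧
    (∀ x y : α, τ (ldiv (τ x) y) = τ (ldiv (τ x) (τ y))) ∧
    (∀ x y : α, τ (rdiv y (τ x)) = τ (rdiv (τ y) (τ x))) ∧
    τ 1 = 1 := by
  obtain ⟨⟨hdec, hidem, hmono, hsub, hl1, hr1⟩, hT1, hT2, hT3⟩ := hτ
  have hone : τ 1 = 1 := by
    have h1 : (1 : α) * 1 ≤ τ 1 * 1 ⊔ 1 * τ 1 := hT3 1 1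
    simp only [one_mul, mul_one, sup_idem] at h1
    exact le_antisymm (hdec 1) h1
  refine ⟨?_, hT1, hT2, ?_, ?_, hone⟩
  · intro x y
    apply le_antisymm
    · have : τ (x ⊓ y) ≤ τ x ⊓ τ y :=
        le_inf (hmono _ _ inf_le_left) (hmono _ _ inf_le_right)
      calc τ (x ⊓ y) = τ (τ (x ⊓ y)) := (hidem _).symm
        _ ≤ τ (τ x ⊓ τ y) := hmono _ _ this
    · exact hmono _ _ (inf_le_inf (hdec x) (hdec y))
  · intro x y
    apply le_antisymm
    · have key : τ x * τ (ldiv (τ x) y) ≤ τ y := by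
        have h1 : τ x * ldiv (τ x) y ≤ y := ldiv_adj.mpr le_rfl
        calc τ x * τ (ldiv (τ x) y) = τ (τ x) * τ (ldiv (τ x) y) := by rw [hidem]
          _ = τ (τ x * ldiv (τ x) y) := (hT2 _ _).symm
          _ ≤ τ y := hmono _ _ h1
      have : τ (ldiv (τ x) y) ≤ ldiv (τ x) (τ y) := ldiv_adj.mp key
      calc τ (ldiv (τ x) y) = τ (τ (ldiv (τ x) y)) := (hidem _).symm
        _ ≤ τ (ldiv (τ x) (τ y)) := hmono _ _ this
    · apply hmono
      exact ldiv_adj.mp (le_trans (ldiv_adj.mpr le_rfl) (hdec y))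
  · intro x y
    apply le_antisymm
    · have key : τ (rdiv y (τ x)) * τ x ≤ τ y := by
        have h1 : rdiv y (τ x) * τ x ≤ y := rdiv_adj.mpr le_rfl
        calc τ (rdiv y (τ x)) * τ x = τ (rdiv y (τ x)) * τ (τ x) := by rw [hidem]
          _ = τ (rdiv y (τ x) * τ x) := (hT2 _ _).symm
          _ ≤ τ y := hmono _ _ h1
      have : τ (rdiv y (τ x)) ≤ rdiv (τ y) (τ x) := rdiv_adj.mp key
      calc τ (rdiv y (τ x)) = τ (τ (rdiv y (τ x))) := (hidem _).symm
        _ ≤ τ (rdiv (τ y) (τ x)) := hmono _ _ this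
    · apply hmono
      exact rdiv_adj.mp (le_trans (rdiv_adj.mpr le_rfl) (hdec y))
end

section
/- Let A be a residuated lattice and τ a Nelson conucleus on A. Define x ⇒ y = τ(x)\y and y ⇐ x = y/τ(x). Then for all x, y ∈ A the following are equivalent: (i) τ(x) ≤ τ(y); (ii) (x⇒y)⇒(x⇒y) ≤ (x⇒y); (iii) (y⇐x)⇐(y⇐x) ≤ (y⇐x). -/
open ResiduatedLattice

variable {α : Type*} [ResiduatedLattice α]

open InvResiduatedLattice

/-- for a residuated lattice `A` with Nelson conucleus `τ`,
with `x ⇒ y = τ(x)\y` and `y ⇐ x = y/τ(x)`, the following are equivalent: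
(i) `τx ≤ τy`; (ii) `(x⇒y)⇒(x⇒y) ≤ x⇒y`; (iii) `(y⇐x)⇐(y⇐x) ≤ y⇐x`. -/
theorem preorder_characterization {α : Type*} [ResiduatedLattice α]
    (τ : α → α) (hτ : IsNelsonConucleus τ) (x y : α) :
    letI dld : α → α → α := fun a b => ldiv (τ a) b
    letI drd : α → α → α := fun b a => rdiv b (τ a)
    (τ x ≤ τ y ↔ dld (dld x y) (dld x y) ≤ dld x y) ∧
    (τ x ≤ τ y ↔ drd (drd y x) (drd y x) ≤ drd y x) := by
  obtain ⟨⟨hle, hidem, hmono, _, hl1, hr1⟩, _⟩ := hτ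
  have mulr : ∀ {a b : α} (c : α), a ≤ b → a * c ≤ b * c := by
    intro a b c h
    exact rdiv_adj.mpr (h.trans (rdiv_adj.mp le_rfl))
  have mull : ∀ (c : α) {a b : α}, a ≤ b → c * a ≤ c * b := by
    intro c a b h
    exact ldiv_adj.mpr (h.trans (ldiv_adj.mp le_rfl))
  show (τ x ≤ τ y ↔
      ldiv (τ (ldiv (τ x) y)) (ldiv (τ x) y) ≤ ldiv (τ x) y) ∧
    (τ x ≤ τ y ↔ rdiv (rdiv y (τ x)) (τ (rdiv y (τ x))) ≤ rdiv y (τ x))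
  constructor
  · set u := ldiv (τ x) y with hu
    constructor
    · intro h
      have hxy : τ x ≤ y := h.trans (hle y)
      have h1u : (1 : α) ≤ u := ldiv_adj.mp (by rwa [mul_one])
      have hτ1u : τ 1 ≤ τ u := hmono _ _ h1u
      -- v := τ u \ u ≤ τ 1 \ u
      have hv : ldiv (τ u) u ≤ ldiv (τ 1) u :=
        ldiv_adj.mp ((mulr _ hτ1u).trans (ldiv_adj.mpr le_rfl))
      -- τ x * (τ 1 \ u) ≤ y
      have key : τ x * ldiv (τ 1) u ≤ y := by
        calc τ x * ldiv (τ 1) u = τ x * τ 1 * ldiv (τ 1) u := by rw [hr1]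
        _ = τ x * (τ 1 * ldiv (τ 1) u) := mul_assoc _ _ _
        _ ≤ τ x * u := mull _ (ldiv_adj.mpr le_rfl)
        _ ≤ y := ldiv_adj.mpr le_rfl
      exact (ldiv_adj.mp ((mull (τ x) hv).trans key))
    · intro h
      have h1 : (1 : α) ≤ ldiv (τ u) u := ldiv_adj.mp (by rw [mul_one]; exact hle u)
      have h1u : (1 : α) ≤ u := h1.trans h
      have hxy : τ x ≤ y := by
        have := (mull (τ x) h1u).trans (ldiv_adj.mpr le_rfl)
        rwa [mul_one] at this
      calc τ x = τ (τ x) := (hidem x).symm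
      _ ≤ τ y := hmono _ _ hxy
  · set u := rdiv y (τ x) with hu
    constructor
    · intro h
      have hxy : τ x ≤ y := h.trans (hle y)
      have h1u : (1 : α) ≤ u := rdiv_adj.mp (by rwa [one_mul])
      have hτ1u : τ 1 ≤ τ u := hmono _ _ h1u
      have hv : rdiv u (τ u) ≤ rdiv u (τ 1) :=
        rdiv_adj.mp ((mull _ hτ1u).trans (rdiv_adj.mpr le_rfl))
      have key : rdiv u (τ 1) * τ x ≤ y := by
        calc rdiv u (τ 1) * τ x = rdiv u (τ 1) * (τ 1 * τ x) := by rw [hl1]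
        _ = rdiv u (τ 1) * τ 1 * τ x := (mul_assoc _ _ _).symm
        _ ≤ u * τ x := mulr _ (rdiv_adj.mpr le_rfl)
        _ ≤ y := rdiv_adj.mpr le_rfl
      exact (rdiv_adj.mp ((mulr (τ x) hv).trans key))
    · intro h
      have h1 : (1 : α) ≤ rdiv u (τ u) := rdiv_adj.mp (by rw [one_mul]; exact hle u)
      have h1u : (1 : α) ≤ u := h1.trans h
      have hxy : τ x ≤ y := by
        have := (mulr (τ x) h1u).trans (rdiv_adj.mpr le_rfl)
        rwa [one_mul] at this
      calc τ x = τ (τ x) := (hidem x).symm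
      _ ≤ τ y := hmono _ _ hxy
end

section
/- If A is a commutative residuated lattice and τ is a Nelson conucleus on A satisfying τ(x)² = τ(x) for all x, then A is 3-potent, i.e. x³ = x² for all x ∈ A. -/
open ResiduatedLattice

variable {α : Type*} [ResiduatedLattice α]

open InvResiduatedLattice

private lemma rl_mul_le_l {α : Type*} [ResiduatedLattice α] {a b : α} (c : α)
    (h : a ≤ b) : c * a ≤ c * b :=
  ldiv_adj.mpr (le_trans h (ldiv_adj.mp le_rfl))

private lemma rl_mul_le_r {α : Type*} [ResiduatedLattice α] {a b : α} (c : α)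
    (h : a ≤ b) : a * c ≤ b * c :=
  rdiv_adj.mpr (le_trans h (rdiv_adj.mp le_rfl))

/-- if `A` is a commutative residuated lattice and `τ` is a
Nelson conucleus on `A` with `τ(x)² = τ(x)` for all `x`, then `A` is
3-potent: `x³ = x²`. -/
theorem three_potent_of_idempotent_conucleus {α : Type*} [ResiduatedLattice α]
    (hcomm : ∀ x y : α, x * y = y * x)
    (τ : α → α) (hτ : IsNelsonConucleus τ)
    (hidem : ∀ x : α, τ x * τ x = τ x) (x : α) :
    x * x * x = x * x := by
  have hle : τ x ≤ x := hτ.1.1 x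
  have key : x * x ≤ τ x * x := by
    have := hτ.2.2.2 x x
    rwa [hcomm x (τ x), sup_idem] at this
  have h1 : x * x * x ≤ x * x := by
    calc x * x * x ≤ τ x * x * x := rl_mul_le_r x key
      _ = τ x * (x * x) := mul_assoc _ _ _
      _ ≤ τ x * (τ x * x) := rl_mul_le_l _ key
      _ = τ x * τ x * x := (mul_assoc _ _ _).symm
      _ = τ x * x := by rw [hidem]
      _ ≤ x * x := rl_mul_le_r x hle
  have h2 : x * x ≤ x * x * x := by
    calc x * x ≤ τ x * x := key
      _ = τ x * τ x * x := by rw [hidem]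
      _ ≤ x * τ x * x := rl_mul_le_r x (rl_mul_le_r _ hle)
      _ ≤ x * x * x := rl_mul_le_r x (rl_mul_le_l _ hle)
  exact le_antisymm h1 h2
end

section
/- Let A be a Nelson-type algebra satisfying (N3) e ≤ ∼e ∨ (∼e → x) for all x. If the identity element e is join-irreducible (i.e. e = a∨b implies e = a or e = b), then either A is integral (x ≤ e for all x) or A is odd (e = ∼e). In particular, every subdirectly irreducible member of the variety of Nelson-type algebras satisfying (N3) is integral or odd. -/
/-- A commutative residuated lattice: a lattice with a commutative monoid
operation and a residual `arrow x z` (i.e. `x → z`) satisfying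
`x * y ≤ z ↔ y ≤ x → z`. -/
class CommResiduatedLattice (α : Type*) extends Lattice α, CommMonoid α where
  arrow : α → α → α
  arrow_adj : ∀ {x y z : α}, x * y ≤ z ↔ y ≤ arrow x z

open CommResiduatedLattice

/-- A commutative involutive residuated lattice: additionally an involution
`∼` with `∼∼x = x` and the contraposition law `x → ∼y = y → ∼x`. -/
class InvCommResiduatedLattice (α : Type*) extends CommResiduatedLattice α where
  neg : α → α
  neg_neg : ∀ x : α, neg (neg x) = x
  contra : ∀ x y : α, arrow x (neg y) = arrow y (neg x)

open InvCommResiduatedLattice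

/-- let `A` be a Nelson-type algebra (a commutative,
distributive involutive residuated lattice satisfying (N1) and (N2))
satisfying (N3) `e ≤ ∼e ∨ (∼e → x)` for all `x`. If `e` is join-irreducible,
then `A` is integral (`x ≤ e` for all `x`) or odd (`e = ∼e`). -/
theorem nelson_type_N3_integral_or_odd {α : Type*} [InvCommResiduatedLattice α]
    (hdistrib : ∀ x y z : α, x ⊓ (y ⊔ z) = (x ⊓ y) ⊔ (x ⊓ z))
    (hN1 : ∀ x y : α, x * y = ((x ⊓ 1) * (x ⊓ 1)) * y ⊔ x * ((y ⊓ 1) * (y ⊓ 1)))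
    (hN2 : ∀ x y : α, ((x * y) ⊓ 1) * ((x * y) ⊓ 1) =
      ((x ⊓ 1) * (x ⊓ 1)) * ((y ⊓ 1) * (y ⊓ 1)))
    (hN3 : ∀ x : α, (1 : α) ≤ InvCommResiduatedLattice.neg 1 ⊔
      CommResiduatedLattice.arrow (InvCommResiduatedLattice.neg 1) x)
    (hji : ∀ a b : α, (1 : α) = a ⊔ b → (1 : α) = a ∨ (1 : α) = b) :
    (∀ x : α, x ≤ 1) ∨ (1 : α) = InvCommResiduatedLattice.neg 1 := by
  classical
  set n : α := InvCommResiduatedLattice.neg 1 with hn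
  have harrow1 : ∀ z : α, arrow (1 : α) z = z := by
    intro z
    apply le_antisymm
    · have : (1 : α) * arrow (1 : α) z ≤ z := arrow_adj.mpr le_rfl
      simpa using this
    · exact arrow_adj.mp (by simp)
  have hnegeq : ∀ x : α, neg x = arrow x n := by
    intro x
    have := contra x 1
    rw [contra x 1, harrow1]
  have hmono : ∀ a b c : α, a ≤ b → c * a ≤ c * b := by
    intro a b c h
    exact arrow_adj.mpr (le_trans h (arrow_adj.mp le_rfl))
  have hanti : ∀ x y : α, x ≤ y → neg y ≤ neg x := by
    intro x y h
    have h1 : y * neg y ≤ n := by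
      rw [hnegeq y]; exact arrow_adj.mpr le_rfl
    have h2 : x * neg y ≤ n := by
      calc x * neg y = neg y * x := mul_comm _ _
        _ ≤ neg y * y := hmono _ _ _ h
        _ = y * neg y := mul_comm _ _
        _ ≤ n := h1
    rw [hnegeq x]
    exact arrow_adj.mp h2
  have key : ∀ x : α, (1 : α) ≤ n ∨ n ≤ x := by
    intro x
    have h3 := hN3 x
    have heq : (1 : α) = (1 ⊓ n) ⊔ (1 ⊓ arrow n x) := by
      rw [← hdistrib]
      exact (inf_eq_left.mpr h3).symm
    rcases hji _ _ heq with h | h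
    · left; exact h.le.trans inf_le_right
    · right
      have h1 : (1 : α) ≤ arrow n x := h.le.trans inf_le_right
      have := arrow_adj.mpr h1
      simpa using this
  by_cases hcase : (1 : α) ≤ n
  · right
    have hn1 : n ⊓ (1 : α) = 1 := inf_eq_right.mpr hcase
    have hsq : n * n = n := by
      have h := hN1 n n
      rw [hn1, one_mul, one_mul, mul_one] at h
      rw [h, sup_idem]
    have hle : n ≤ 1 := by
      have h1 : n ≤ arrow n n := arrow_adj.mp hsq.le
      have h2 : neg n = arrow n n := hnegeq n
      have h3 : neg n = 1 := neg_neg 1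
      rw [← h2, h3] at h1
      exact h1
    exact le_antisymm hcase hle
  · left
    intro x
    rcases key (neg x) with h | h
    · exact absurd h hcase
    · have h1 : neg (neg x) ≤ neg n := hanti _ _ h
      rw [InvCommResiduatedLattice.neg_neg, hn, InvCommResiduatedLattice.neg_neg] at h1
      exact h1
end

section
/- Let H be a Brouwerian algebra, ι ∈ H, and F a Boolean filter of H. Then the set Tw(H,ι,F) = {(a,b) ∈ H×H : a∧b ≤ ι and a∨b ∈ F} is closed under the twist operations ∼, ∧, ∨, ·, → of Tw(H,ι), contains the identity (e,ι), and contains the pair (a, a→ι) for every a ∈ H; hence it is the universe of a subalgebra of Tw(H,ι) containing the image of τ_Tw. -/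
/- A Brouwerian algebra is a commutative integral residuated lattice in
which `x·y = x∧y`; equivalently, a generalized Heyting algebra (a lattice
with top `⊤ = e` and relative pseudocomplement `⇨`). We use Mathlib's
`GeneralizedHeytingAlgebra`. -/

variable {α : Type*} [GeneralizedHeytingAlgebra α]

/-- Involution of the twist structure over a Brouwerian algebra. -/
def tnegH (p : α × α) : α × α := (p.2, p.1)

/-- Join of the twist structure `H × H^∂`. -/
def tjoinH (p q : α × α) : α × α := (p.1 ⊔ q.1, p.2 ⊓ q.2)

/-- Meet of the twist structure `H × H^∂`. -/
def tmeetH (p q : α × α) : α × α := (p.1 ⊓ q.1, p.2 ⊔ q.2)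

/-- Multiplication of the twist structure over a Brouwerian algebra:
`(a,b)·(a′,b′) = (a∧a′, (a⇨b′) ∧ (a′⇨b))`. -/
def tmulH (p q : α × α) : α × α := (p.1 ⊓ q.1, (p.1 ⇨ q.2) ⊓ (q.1 ⇨ p.2))

/-- Implication of the twist structure over a Brouwerian algebra:
`(a,b)→(a′,b′) = ((a⇨a′) ∧ (b′⇨b), b′ ∧ a)`. -/
def timpH (p q : α × α) : α × α := ((p.1 ⇨ q.1) ⊓ (q.2 ⇨ p.2), q.2 ⊓ p.1)

/-- Auxiliary distributive-lattice fact. -/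
lemma key_tw {β : Type*} [DistribLattice β] (u c v d : β) (hd : d ≤ c) :
    (u ⊔ c) ⊓ (v ⊔ d) ≤ c ⊔ (u ⊓ v) := by
  rw [inf_sup_left, inf_sup_right, inf_sup_right]
  refine sup_le (sup_le ?_ ?_) (sup_le ?_ ?_)
  · exact le_sup_right
  · exact le_sup_of_le_left inf_le_left
  · exact le_sup_of_le_left (inf_le_right.trans hd)
  · exact le_sup_of_le_left inf_le_left

/-- Auxiliary distributive-lattice fact. -/
lemma key_tw2 {β : Type*} [DistribLattice β] (a b a' b' : β) :
    (a ⊔ b) ⊓ (a' ⊔ b') ≤ (a ⊓ a') ⊔ (b ⊔ b') := by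
  rw [inf_sup_left, inf_sup_right, inf_sup_right]
  refine sup_le (sup_le ?_ ?_) (sup_le ?_ ?_)
  · exact le_sup_left
  · exact le_sup_of_le_right (le_sup_left.trans' inf_le_left)
  · exact le_sup_of_le_right (le_sup_right.trans' inf_le_right)
  · exact le_sup_of_le_right (le_sup_right.trans' inf_le_right)

/-- let `H` be a Brouwerian algebra, `ι ∈ H`, and `F` a
Boolean filter of `H`. Then `Tw(H,ι,F) = {(a,b) : a∧b ≤ ι, a∨b ∈ F}` is
closed under the twist operations `∼, ∧, ∨, ·, →` of `Tw(H,ι)`, contains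
the identity `(⊤,ι)`, and contains `(a, a⇨ι)` for every `a ∈ H`; hence it
is the universe of a subalgebra of `Tw(H,ι)` containing the image of
`τ_Tw`. -/
theorem twist_filter_subalgebra (ι : α) (F : Set α)
    (hne : (⊤ : α) ∈ F)
    (hinf : ∀ a ∈ F, ∀ b ∈ F, a ⊓ b ∈ F)
    (hup : ∀ a ∈ F, ∀ b : α, a ≤ b → b ∈ F)
    (hbool : ∀ x y : α, x ⊔ (x ⇨ y) ∈ F) :
    letI S : Set (α × α) := {p | p.1 ⊓ p.2 ≤ ι ∧ p.1 ⊔ p.2 ∈ F}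
    (∀ p ∈ S, tnegH p ∈ S) ∧
    (∀ p ∈ S, ∀ q ∈ S, tmeetH p q ∈ S) ∧
    (∀ p ∈ S, ∀ q ∈ S, tjoinH p q ∈ S) ∧
    (∀ p ∈ S, ∀ q ∈ S, tmulH p q ∈ S) ∧
    (∀ p ∈ S, ∀ q ∈ S, timpH p q ∈ S) ∧
    (((⊤ : α), ι) ∈ S) ∧
    (∀ a : α, (a, a ⇨ ι) ∈ S) := by
  refine ⟨?_, ?_, ?_, ?_, ?_, ?_, ?_⟩
  · rintro ⟨a, b⟩ ⟨h1, h2⟩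
    exact ⟨by simpa [tnegH, inf_comm] using h1, by simpa [tnegH, sup_comm] using h2⟩
  · rintro ⟨a, b⟩ ⟨h1, h2⟩ ⟨a', b'⟩ ⟨h1', h2'⟩
    refine ⟨?_, ?_⟩
    · show (a ⊓ a') ⊓ (b ⊔ b') ≤ ι
      rw [inf_sup_left]
      refine sup_le ?_ ?_
      · exact (inf_le_inf_right b inf_le_left).trans h1
      · exact (inf_le_inf_right b' inf_le_right).trans h1'
    · exact hup _ (hinf _ h2 _ h2') _ (key_tw2 a b a' b')
  · rintro ⟨a, b⟩ ⟨h1, h2⟩ ⟨a', b'⟩ ⟨h1', h2'⟩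
    refine ⟨?_, ?_⟩
    · show (a ⊔ a') ⊓ (b ⊓ b') ≤ ι
      rw [inf_sup_right]
      refine sup_le ?_ ?_
      · exact (inf_le_inf_left a inf_le_left).trans h1
      · exact (inf_le_inf_left a' inf_le_right).trans h1'
    · refine hup _ (hinf _ h2 _ h2') _ ?_
      calc (a ⊔ b) ⊓ (a' ⊔ b') ≤ (b ⊓ b') ⊔ (a ⊔ a') := by
            simpa [sup_comm, inf_comm] using key_tw2 b a b' a'
        _ = (a ⊔ a') ⊔ (b ⊓ b') := sup_comm _ _
  · rintro ⟨a, b⟩ ⟨h1, h2⟩ ⟨a', b'⟩ ⟨h1', h2'⟩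
    refine ⟨?_, ?_⟩
    · show (a ⊓ a') ⊓ ((a ⇨ b') ⊓ (a' ⇨ b)) ≤ ι
      calc (a ⊓ a') ⊓ ((a ⇨ b') ⊓ (a' ⇨ b)) ≤ a' ⊓ (a ⊓ (a ⇨ b')) := by
            refine le_inf (inf_le_left.trans inf_le_right)
              (le_inf (inf_le_left.trans inf_le_left) (inf_le_right.trans inf_le_left))
        _ = a' ⊓ (a ⊓ b') := by rw [inf_himp]
        _ ≤ a' ⊓ b' := inf_le_inf_left _ inf_le_right
        _ ≤ ι := h1'
    · -- filter part
      have hX : (a ⊔ (a ⇨ b')) ⊓ (a' ⊔ b') ≤ (a ⇨ b') ⊔ (a ⊓ a') :=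
        key_tw a (a ⇨ b') a' b' le_himp
      have hY : (a' ⊔ (a' ⇨ b)) ⊓ (a ⊔ b) ≤ (a' ⇨ b) ⊔ (a' ⊓ a) :=
        key_tw a' (a' ⇨ b) a b le_himp
      have hmem : ((a ⊔ (a ⇨ b')) ⊓ (a' ⊔ b')) ⊓ ((a' ⊔ (a' ⇨ b)) ⊓ (a ⊔ b)) ∈ F :=
        hinf _ (hinf _ (hbool a b') _ h2') _ (hinf _ (hbool a' b) _ h2)
      refine hup _ hmem _ ?_
      calc ((a ⊔ (a ⇨ b')) ⊓ (a' ⊔ b')) ⊓ ((a' ⊔ (a' ⇨ b)) ⊓ (a ⊔ b))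
          ≤ ((a ⇨ b') ⊔ (a ⊓ a')) ⊓ ((a' ⇨ b) ⊔ (a ⊓ a')) := by
            refine inf_le_inf hX (hY.trans (sup_le le_sup_left ?_))
            exact le_sup_of_le_right (le_of_eq (inf_comm _ _))
        _ = ((a ⇨ b') ⊓ (a' ⇨ b)) ⊔ (a ⊓ a') := (sup_inf_right _ _ _).symm
        _ = (a ⊓ a') ⊔ ((a ⇨ b') ⊓ (a' ⇨ b)) := sup_comm _ _
  · rintro ⟨a, b⟩ ⟨h1, h2⟩ ⟨a', b'⟩ ⟨h1', h2'⟩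
    refine ⟨?_, ?_⟩
    · show ((a ⇨ a') ⊓ (b' ⇨ b)) ⊓ (b' ⊓ a) ≤ ι
      calc ((a ⇨ a') ⊓ (b' ⇨ b)) ⊓ (b' ⊓ a) ≤ (a ⊓ (a ⇨ a')) ⊓ b' := by
            refine le_inf (le_inf (inf_le_right.trans inf_le_right)
              (inf_le_left.trans inf_le_left)) (inf_le_right.trans inf_le_left)
        _ = (a ⊓ a') ⊓ b' := by rw [inf_himp]
        _ ≤ a' ⊓ b' := inf_le_inf_right _ inf_le_right
        _ ≤ ι := h1'
    · have hX : (a ⊔ (a ⇨ a')) ⊓ (a' ⊔ b') ≤ (a ⇨ a') ⊔ (a ⊓ b') := by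
        have := key_tw a (a ⇨ a') b' a' le_himp
        refine le_trans ?_ this
        exact inf_le_inf_left _ (le_of_eq (sup_comm _ _))
      have hY : (b' ⊔ (b' ⇨ b)) ⊓ (a ⊔ b) ≤ (b' ⇨ b) ⊔ (b' ⊓ a) :=
        key_tw b' (b' ⇨ b) a b le_himp
      have hmem : ((a ⊔ (a ⇨ a')) ⊓ (a' ⊔ b')) ⊓ ((b' ⊔ (b' ⇨ b)) ⊓ (a ⊔ b)) ∈ F :=
        hinf _ (hinf _ (hbool a a') _ h2') _ (hinf _ (hbool b' b) _ h2)
      refine hup _ hmem _ ?_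
      calc ((a ⊔ (a ⇨ a')) ⊓ (a' ⊔ b')) ⊓ ((b' ⊔ (b' ⇨ b)) ⊓ (a ⊔ b))
          ≤ ((a ⇨ a') ⊔ (b' ⊓ a)) ⊓ ((b' ⇨ b) ⊔ (b' ⊓ a)) := by
            refine inf_le_inf (hX.trans (sup_le le_sup_left ?_)) hY
            exact le_sup_of_le_right (le_of_eq (inf_comm _ _))
        _ = ((a ⇨ a') ⊓ (b' ⇨ b)) ⊔ (b' ⊓ a) := (sup_inf_right _ _ _).symm
  · exact ⟨by simp, hup _ hne _ le_sup_left⟩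
  · intro a
    refine ⟨le_of_eq_of_le (inf_himp a ι) inf_le_right, ?_⟩
    exact hup _ (hbool a ι) _ le_rfl
end
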